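/- Let (V, ω) be a 2n-dimensional symplectic vector space and let J₁, J₂ be two compatible positive complex structures. Then J₂ = A J₁ A⁻¹ for some A in the symplectic group Sp(V, ω); i.e., Sp(V,ω) acts transitively on the set of compatible positive complex structures. -/

import Mathlib

/-!
A compatible positive complex structure `J` turns `V` into an `n`-dimensional complex vector
space (with `i` acting as `J`) on which `⟪v, w⟫ = ω (J v) w - i ω v w` is a Hermitian inner
product. A unitary basis then identifies `(V, ω, J)` with `(ℂⁿ, -Im ⟪·, ·⟫, i)`; composing the
identification for `J₁` with the inverse of the one for `J₂` gives the symplectic `A`.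
-/

open Complex

noncomputable def complexStructureHom {V : Type*} [AddCommGroup V] [Module ℝ V]
    (J : V →ₗ[ℝ] V) (hJ2 : ∀ v, J (J v) = -v) : ℂ →+* Module.End ℝ V where
  toFun c := c.re • 1 + c.im • J
  map_one' := by ext v; simp
  map_zero' := by ext v; simp
  map_add' c d := by
    ext v
    simp only [add_re, add_im, add_smul, LinearMap.add_apply]
    abel
  map_mul' c d := by
    ext v
    simp [Module.End.mul_apply, mul_re, mul_im, smul_add, smul_smul, hJ2, sub_smul,
      add_smul]
    abel

section CompatibleForm

variable {V : Type*} [AddCommGroup V] [Module ℂ V] [Module ℝ V] [IsScalarTower ℝ ℂ V]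

theorem smul_eq_re_smul_add_im_smul_I_smul (c : ℂ) (v : V) :
    c • v = c.re • v + c.im • (I • v) := by
  conv_lhs => rw [← re_add_im c]
  rw [add_smul, mul_smul]
  exact congrArg₂ (· + ·) (algebraMap_smul ℂ c.re v) (algebraMap_smul ℂ c.im (I • v))

omit [IsScalarTower ℝ ℂ V] in
theorem symm_of_compatible {ω : V →ₗ[ℝ] V →ₗ[ℝ] ℝ} (halt : ω.IsAlt)
    (hcomp : ∀ v w, ω (I • v) (I • w) = ω v w) (v w : V) :
    ω (I • w) v = ω (I • v) w := by
  calc ω (I • w) v = ω (I • I • w) (I • v) := (hcomp _ _).symm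
  _ = -ω w (I • v) := by rw [smul_smul, I_mul_I, neg_one_smul, map_neg, LinearMap.neg_apply]
  _ = ω (I • v) w := halt.neg _ _

noncomputable abbrev innerCoreOfCompatible (ω : V →ₗ[ℝ] V →ₗ[ℝ] ℝ) (halt : ω.IsAlt)
    (hcomp : ∀ v w, ω (I • v) (I • w) = ω v w) (hpos : ∀ v, v ≠ 0 → 0 < ω (I • v) v) :
    InnerProductSpace.Core ℂ V where
  inner v w := ⟨ω (I • v) w, -ω v w⟩
  conj_inner_symm v w := by
    apply Complex.ext <;> simp [symm_of_compatible halt hcomp v w, ← halt.neg v w]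
  re_inner_nonneg v := by
    rcases eq_or_ne v 0 with rfl | hv
    · simp
    · exact (hpos v hv).le
  add_left u v w := by apply Complex.ext <;> simp [smul_add, add_comm]
  smul_left v w c := by
    rw [smul_eq_re_smul_add_im_smul_I_smul c v]
    apply Complex.ext <;>
      simp [smul_add, smul_comm _ I, smul_smul, I_mul_I, mul_re, mul_im,
        symm_of_compatible halt hcomp] <;> ring
  definite v hv := by
    by_contra hv0
    have := congrArg re hv
    exact (hpos v hv0).ne' this

theorem exists_linearEquiv_euclideanSpace_of_compatible [FiniteDimensional ℂ V] {n : ℕ}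
    (hdim : Module.finrank ℂ V = n) (ω : V →ₗ[ℝ] V →ₗ[ℝ] ℝ) (halt : ω.IsAlt)
    (hcomp : ∀ v w, ω (I • v) (I • w) = ω v w) (hpos : ∀ v, v ≠ 0 → 0 < ω (I • v) v) :
    ∃ e : V ≃ₗ[ℂ] EuclideanSpace ℂ (Fin n), ∀ v w, ω v w = -(inner ℂ (e v) (e w)).im := by
  let core := innerCoreOfCompatible ω halt hcomp hpos
  let _ : NormedAddCommGroup V := core.toNormedAddCommGroup
  let _ : InnerProductSpace ℂ V := .ofCore core.toCore
  let e := ((stdOrthonormalBasis ℂ V).reindex (finCongr hdim)).repr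
  refine ⟨e.toLinearEquiv, fun v w => ?_⟩
  show ω v w = -(inner ℂ (e v) (e w)).im
  rw [e.inner_map_map]
  exact (neg_neg _).symm

end CompatibleForm

open Module in
theorem exists_linearEquiv_euclideanSpace_of_complexStructure {V : Type*} [AddCommGroup V]
    [Module ℝ V] [FiniteDimensional ℝ V] {n : ℕ} (hdim : finrank ℝ V = 2 * n)
    (ω : V →ₗ[ℝ] V →ₗ[ℝ] ℝ) (halt : ω.IsAlt) (J : V →ₗ[ℝ] V) (hJ2 : ∀ v, J (J v) = -v)
    (hcomp : ∀ v w, ω (J v) (J w) = ω v w) (hpos : ∀ v, v ≠ 0 → 0 < ω (J v) v) :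
    ∃ e : V ≃ₗ[ℝ] EuclideanSpace ℂ (Fin n),
      (∀ v, e (J v) = I • e v) ∧ ∀ v w, ω v w = -(inner ℂ (e v) (e w)).im := by
  let _ : Module ℂ V := Module.compHom V (complexStructureHom J hJ2)
  have smul_def (c : ℂ) (v : V) : c • v = c.re • v + c.im • J v := rfl
  have hI (v : V) : I • v = J v := by simp [smul_def]
  have : IsScalarTower ℝ ℂ V := ⟨fun r c v => by
    simp only [smul_def, smul_add, smul_smul, real_smul, re_ofReal_mul, im_ofReal_mul]⟩
  have : FiniteDimensional ℂ V := .of_restrictScalars_finite ℝ ℂ V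
  have hdimℂ : finrank ℂ V = n := by
    have := finrank_mul_finrank ℝ ℂ V
    rw [Complex.finrank_real_complex] at this
    omega
  obtain ⟨e, he⟩ := exists_linearEquiv_euclideanSpace_of_compatible hdimℂ ω halt
    (by simpa only [hI] using hcomp) (by simpa only [hI] using hpos)
  exact ⟨e.restrictScalars ℝ, fun v => by simp [← hI], he⟩

theorem stmt19_general {V : Type*} [AddCommGroup V] [Module ℝ V] [FiniteDimensional ℝ V]
    {n : ℕ} (hdim : Module.finrank ℝ V = 2 * n)
    (ω : V →ₗ[ℝ] V →ₗ[ℝ] ℝ) (halt : ∀ v, ω v v = 0)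
    (J₁ J₂ : V →ₗ[ℝ] V)
    (hJ₁2 : ∀ v, J₁ (J₁ v) = -v) (hJ₂2 : ∀ v, J₂ (J₂ v) = -v)
    (hcomp₁ : ∀ v w, ω (J₁ v) (J₁ w) = ω v w) (hcomp₂ : ∀ v w, ω (J₂ v) (J₂ w) = ω v w)
    (hpos₁ : ∀ v, v ≠ 0 → 0 < ω (J₁ v) v) (hpos₂ : ∀ v, v ≠ 0 → 0 < ω (J₂ v) v) :
    ∃ A : V ≃ₗ[ℝ] V, (∀ v w, ω (A v) (A w) = ω v w) ∧
      ∀ v, J₂ v = A (J₁ (A.symm v)) := by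
  obtain ⟨e₁, he₁J, he₁ω⟩ :=
    exists_linearEquiv_euclideanSpace_of_complexStructure hdim ω halt J₁ hJ₁2 hcomp₁ hpos₁
  obtain ⟨e₂, he₂J, he₂ω⟩ :=
    exists_linearEquiv_euclideanSpace_of_complexStructure hdim ω halt J₂ hJ₂2 hcomp₂ hpos₂
  refine ⟨e₁.trans e₂.symm, fun v w => ?_, fun v => ?_⟩
  · rw [LinearEquiv.trans_apply, LinearEquiv.trans_apply, he₂ω, e₂.apply_symm_apply,
      e₂.apply_symm_apply, he₁ω v w]
  · apply e₂.injective
    simp [he₂J, he₁J]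

/-- The symplectic group of a `2n`-dimensional symplectic vector space `(V, ω)` acts
transitively on the set of compatible positive complex structures: any two such `J₁, J₂`
are conjugate by a symplectic automorphism `A`, i.e. `J₂ = A J₁ A⁻¹`. -/
theorem stmt19 {V : Type*} [AddCommGroup V] [Module ℝ V] [FiniteDimensional ℝ V]
    {n : ℕ} (hdim : Module.finrank ℝ V = 2 * n)
    (ω : V →ₗ[ℝ] V →ₗ[ℝ] ℝ) (halt : ∀ v, ω v v = 0)
    (hnd : ∀ v, (∀ w, ω v w = 0) → v = 0)
    (J₁ J₂ : V →ₗ[ℝ] V)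
    (hJ₁2 : ∀ v, J₁ (J₁ v) = -v) (hJ₂2 : ∀ v, J₂ (J₂ v) = -v)
    (hcomp₁ : ∀ v w, ω (J₁ v) (J₁ w) = ω v w) (hcomp₂ : ∀ v w, ω (J₂ v) (J₂ w) = ω v w)
    (hpos₁ : ∀ v, v ≠ 0 → 0 < ω (J₁ v) v) (hpos₂ : ∀ v, v ≠ 0 → 0 < ω (J₂ v) v) :
    ∃ A : V ≃ₗ[ℝ] V, (∀ v w, ω (A v) (A w) = ω v w) ∧
      ∀ v, J₂ v = A (J₁ (A.symm v)) :=
  stmt19_general hdim ω halt J₁ J₂ hJ₁2 hJ₂2 hcomp₁ hcomp₂ hpos₁ hpos₂
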